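/- Let h ≥ 1 be an integer and let n = 2k where k ≥ 1 is an odd integer. If the cyclotomic polynomial Φ_n(t) divides p_h(t) = t^{4h} − t^{4h−1} + t^{2h} − t + 1 in ℤ[t], then n divides 2h − 2 or n divides 6h − 2. -/

import Mathlib

/-!
Every primitive `n`-th root of unity `z` is a root of `p_h`; with `w = z ^ (2h)` this reads
`w² + w + 1 = w z^(2h-1) + z`, whose right side has modulus at most `2`. The order `d` of `w`
divides the odd number `k`. Passing to a Galois conjugate of `z`, `w` can be any primitive `d`-th
root of unity, in particular `exp (2πi/d)`, for which `|w² + w + 1| = 2 cos (2π/d) + 1 > 2`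
unless `d ∈ {3, 5}`. For `d = 3` the relation gives `(z^(2h-1))² = -1`, impossible as `n/2` is odd.
For `d = 5` it forces `z⁵ = -1`, so `n = 10`, and checking `h mod 5` leaves `h ≡ 1, 2`.
-/

open Polynomial Complex

theorem IsPrimitiveRoot.aeval_eq_zero_of_cyclotomic_dvd {R : Type*} [CommRing R] [IsDomain R]
    {z : R} {n : ℕ} (hz : IsPrimitiveRoot z n) (hn : 0 < n) {p : ℤ[X]}
    (hp : cyclotomic n ℤ ∣ p) : aeval z p = 0 := by
  obtain ⟨q, rfl⟩ := hp
  rw [map_mul, aeval_def, eval₂_eq_eval_map, map_cyclotomic, (hz.isRoot_cyclotomic hn).eq_zero,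
    zero_mul]

theorem IsPrimitiveRoot.exists_isPrimitiveRoot_pow_eq {R : Type*} [CommRing R] [IsDomain R]
    {ζ e : R} {n a d : ℕ} [NeZero n] (hζ : IsPrimitiveRoot ζ n)
    (hu : IsPrimitiveRoot (ζ ^ a) d) (he : IsPrimitiveRoot e d) :
    ∃ z, IsPrimitiveRoot z n ∧ z ^ a = e := by
  have hdn : d ∣ n := hu.dvd_of_pow_eq_one _ (by
    rw [← pow_mul, mul_comm, pow_mul, hζ.pow_eq_one, one_pow])
  have : NeZero d := ⟨fun hd => NeZero.ne n (Nat.eq_zero_of_zero_dvd (hd ▸ hdn))⟩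
  obtain ⟨i, hid, hi, rfl⟩ := hu.isPrimitiveRoot_iff.mp he
  obtain ⟨U, hU⟩ := ZMod.unitsMap_surjective hdn (ZMod.unitOfCoprime i hi)
  refine ⟨ζ ^ (U : ZMod n).val, hζ.pow_of_coprime _ (ZMod.val_coe_unit_coprime U), ?_⟩
  have hmod : (U : ZMod n).val % d = i % d := by
    rw [← ZMod.natCast_eq_natCast_iff', ZMod.natCast_val, ← ZMod.coe_unitOfCoprime i hi, ← hU]
    rfl
  rw [← pow_mul, mul_comm, pow_mul, ← pow_mod_orderOf, ← hu.eq_orderOf, hmod,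
    Nat.mod_eq_of_lt hid]

theorem sq_add_add_one_eq_of_aeval_eq_zero {R : Type*} [CommRing R] {h : ℕ} (hh : 1 ≤ h) {z : R}
    (hz : aeval z ((X : ℤ[X]) ^ (4 * h) - X ^ (4 * h - 1) + X ^ (2 * h) - X + 1) = 0) :
    (z ^ (2 * h)) ^ 2 + z ^ (2 * h) + 1 = z ^ (2 * h) * z ^ (2 * h - 1) + z := by
  simp only [map_add, map_sub, map_pow, map_one, aeval_X] at hz
  rw [← pow_mul, ← pow_add, show 2 * h * 2 = 4 * h by ring,
    show 2 * h + (2 * h - 1) = 4 * h - 1 by omega]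
  linear_combination hz

section

variable {K : Type*} [Field K] {ζ u v : K}

theorem sq_eq_neg_one_of_pow_three_eq_one (hu3 : u ^ 3 = 1) (hu1 : u ≠ 1) (hζ : ζ ≠ 0)
    (hv : ζ * v = u) (hrel : u ^ 2 + u + 1 = u * v + ζ) : v ^ 2 = -1 := by
  have hsum : u ^ 2 + u + 1 = 0 := by
    have : (u - 1) * (u ^ 2 + u + 1) = 0 := by linear_combination hu3
    exact (mul_eq_zero.mp this).resolve_left (sub_ne_zero.mpr hu1)
  have : ζ * (v ^ 2 + 1) = 0 := by linear_combination v * hv + hsum - hrel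
  linear_combination (mul_eq_zero.mp this).resolve_left hζ

theorem pow_five_eq_neg_one_of_pow_five_eq_one (hu5 : u ^ 5 = 1) (hu1 : u ≠ 1)
    (hv : ζ * v = u) (hrel : u ^ 2 + u + 1 = u * v + ζ) : ζ ^ 5 = -1 := by
  have hsum : u ^ 4 + u ^ 3 + u ^ 2 + u + 1 = 0 := by
    have : (u - 1) * (u ^ 4 + u ^ 3 + u ^ 2 + u + 1) = 0 := by linear_combination hu5
    exact (mul_eq_zero.mp this).resolve_left (sub_ne_zero.mpr hu1)
  have hu0 : u ≠ 0 := by rintro rfl; simp at hu5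
  -- `y = u + u⁻¹ + 1` is a root of `Y ^ 2 - Y - 1`, and `v + v⁻¹ = y`
  obtain ⟨y, hy_def⟩ : ∃ y, y = u ^ 4 + u + 1 := ⟨_, rfl⟩
  have hy : y ^ 2 = y + 1 := by rw [hy_def]; linear_combination hsum + (u ^ 3 + 2) * hu5
  have hvy : u * (v ^ 2 - y * v + 1) = 0 := by
    rw [hy_def]; linear_combination (-v) * hrel - v * hu5 - hv
  have hv2 : v ^ 2 = y * v - 1 := by linear_combination (mul_eq_zero.mp hvy).resolve_left hu0
  have hv3 : v ^ 3 = y * v - y := by linear_combination (v + y) * hv2 + v * hy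
  have hv5 : v ^ 5 = -1 := by linear_combination (v ^ 2 + y) * hv3 - y * hv2 - hy
  have hζv : ζ ^ 5 * v ^ 5 = 1 := by rw [← mul_pow, hv, hu5]
  linear_combination ζ ^ 5 * hv5 - hζv

theorem mod_five_eq_of_isPrimitiveRoot_ten [CharZero K] (hζ : IsPrimitiveRoot ζ 10) {h : ℕ}
    (hv : ζ * v = ζ ^ (2 * h))
    (hrel : (ζ ^ (2 * h)) ^ 2 + ζ ^ (2 * h) + 1 = ζ ^ (2 * h) * v + ζ) :
    h % 5 = 1 ∨ h % 5 = 2 := by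
  have h5 : ζ ^ 5 = -1 := (hζ.pow_of_dvd (by norm_num) (by norm_num)).eq_neg_one_of_two_right
  have hΦ : ζ ^ 4 - ζ ^ 3 + ζ ^ 2 - ζ + 1 = 0 := by
    have hne : ζ + 1 ≠ 0 := fun h1 => by
      have := hζ.pow_eq_one_iff_dvd 2
      rw [eq_neg_of_add_eq_zero_left h1] at this
      norm_num at this
    have : (ζ + 1) * (ζ ^ 4 - ζ ^ 3 + ζ ^ 2 - ζ + 1) = 0 := by linear_combination h5
    exact (mul_eq_zero.mp this).resolve_left hne
  -- the other residues force `ζ + ζ⁻¹ = 3`, but `ζ + ζ⁻¹` is a root of `Y ^ 2 - Y - 1`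
  have hq : ζ ^ 2 - 3 * ζ + 1 ≠ 0 := fun hq => by
    have : (5 : K) = 0 := by
      linear_combination 45 * hq - (3 * ζ - 8) * (hΦ - (ζ ^ 2 + 2 * ζ + 6) * hq)
    norm_num at this
  have hu : ζ ^ (2 * h) = ζ ^ (2 * (h % 5)) := by
    rw [show 2 * h = 10 * (h / 5) + 2 * (h % 5) by omega, pow_add, pow_mul, hζ.pow_eq_one,
      one_pow, one_mul]
  rw [hu] at hv hrel
  obtain hr | hr | hr | hr | hr : h % 5 = 0 ∨ h % 5 = 1 ∨ h % 5 = 2 ∨ h % 5 = 3 ∨ h % 5 = 4 := by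
    omega
  · rw [hr] at hv hrel
    exact absurd (by linear_combination (-ζ) * hrel - hv) hq
  · exact Or.inl hr
  · exact Or.inr hr
  · rw [hr, show ζ ^ (2 * 3) = -ζ by linear_combination ζ * h5] at hv hrel
    exact absurd (by linear_combination hrel - hv) hq
  · rw [hr, show ζ ^ (2 * 4) = -ζ ^ 3 by linear_combination ζ ^ 3 * h5] at hv hrel
    have hg : ζ ^ 3 + 2 * ζ - 2 = 0 := by linear_combination -hrel + ζ ^ 2 * hv + (ζ - 1) * h5
    exact absurd (by linear_combination (ζ - 1) * hg - hΦ) hq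

end

theorem norm_exp_mul_I_sq_add_add_one (θ : ℝ) :
    ‖exp (θ * I) ^ 2 + exp (θ * I) + 1‖ = |2 * Real.cos θ + 1| := by
  have : exp (θ * I) ^ 2 + exp (θ * I) + 1 = exp (θ * I) * ((2 * Real.cos θ + 1 : ℝ) : ℂ) := by
    have hinv : exp (θ * I) * exp (-θ * I) = 1 := by rw [← exp_add]; simp
    push_cast
    linear_combination (-exp (θ * I)) * two_cos (θ : ℂ) - hinv
  rw [this, norm_mul, norm_exp_ofReal_mul_I, one_mul, norm_real, Real.norm_eq_abs]

theorem half_lt_cos_two_pi_div {d : ℕ} (hd : d = 1 ∨ 7 ≤ d) :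
    1 / 2 < Real.cos (2 * Real.pi / d) := by
  rcases hd with rfl | hd
  · norm_num
  · have hd' : (7 : ℝ) ≤ d := by exact_mod_cast hd
    rw [← Real.cos_pi_div_three]
    apply Real.cos_lt_cos_of_nonneg_of_le_pi (by positivity) (by linarith [Real.pi_pos])
    rw [div_lt_div_iff₀ (by positivity) (by norm_num)]
    nlinarith [Real.pi_pos]

theorem exists_isPrimitiveRoot_two_lt_norm_sq_add_add_one {d : ℕ} (hd : d = 1 ∨ 7 ≤ d) :
    ∃ e : ℂ, IsPrimitiveRoot e d ∧ 2 < ‖e ^ 2 + e + 1‖ := by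
  refine ⟨exp (2 * Real.pi * I / d), isPrimitiveRoot_exp d (by omega), ?_⟩
  rw [show 2 * Real.pi * I / d = (2 * Real.pi / d : ℝ) * I by push_cast; ring,
    norm_exp_mul_I_sq_add_add_one]
  have := half_lt_cos_two_pi_div hd
  rw [abs_of_pos (by linarith)]
  linarith

theorem norm_sq_add_add_one_le_two {w z : ℂ} {m : ℕ} (hw : ‖w‖ = 1) (hz : ‖z‖ = 1)
    (hrel : w ^ 2 + w + 1 = w * z ^ m + z) : ‖w ^ 2 + w + 1‖ ≤ 2 := by
  calc ‖w ^ 2 + w + 1‖ ≤ ‖w * z ^ m‖ + ‖z‖ := hrel ▸ norm_add_le _ _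
    _ = 2 := by rw [norm_mul, norm_pow, hw, hz]; norm_num

theorem stmt_6_general (h : ℕ) (hh : 1 ≤ h) (k : ℕ) (hkodd : Odd k)
    (n : ℕ) (hn : n = 2 * k)
    (hdvd : cyclotomic n ℤ ∣
      (X : ℤ[X]) ^ (4 * h) - X ^ (4 * h - 1) + X ^ (2 * h) - X + 1) :
    n ∣ 2 * h - 2 ∨ n ∣ 6 * h - 2 := by
  have hn0 : NeZero n := ⟨by have := hkodd.pos; omega⟩
  have hrel (z : ℂ) (hz : IsPrimitiveRoot z n) :
      (z ^ (2 * h)) ^ 2 + z ^ (2 * h) + 1 = z ^ (2 * h) * z ^ (2 * h - 1) + z :=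
    sq_add_add_one_eq_of_aeval_eq_zero hh (hz.aeval_eq_zero_of_cyclotomic_dvd (NeZero.pos n) hdvd)
  have hmul (z : ℂ) : z * z ^ (2 * h - 1) = z ^ (2 * h) := by rw [← pow_succ']; congr 1; omega
  obtain ⟨ζ, hζ⟩ : ∃ ζ : ℂ, IsPrimitiveRoot ζ n := ⟨_, isPrimitiveRoot_exp n (NeZero.ne n)⟩
  obtain ⟨d, hu⟩ : ∃ d, IsPrimitiveRoot (ζ ^ (2 * h)) d := ⟨_, .orderOf _⟩
  have hdk : d ∣ k := hu.dvd_of_pow_eq_one k (by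
    rw [← pow_mul, show 2 * h * k = n * h by rw [hn]; ring, pow_mul, hζ.pow_eq_one, one_pow])
  obtain hd | rfl | rfl : (d = 1 ∨ 7 ≤ d) ∨ d = 3 ∨ d = 5 := by
    obtain ⟨j, hj⟩ := hkodd.of_dvd_nat hdk; omega
  · obtain ⟨e, he, he2⟩ := exists_isPrimitiveRoot_two_lt_norm_sq_add_add_one hd
    obtain ⟨z, hz, rfl⟩ := hζ.exists_isPrimitiveRoot_pow_eq hu he
    have := norm_sq_add_add_one_le_two (he.norm'_eq_one (by omega))
      (hz.norm'_eq_one (NeZero.ne n)) (hrel z hz)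
    linarith
  · have hv2 := sq_eq_neg_one_of_pow_three_eq_one hu.pow_eq_one (hu.ne_one (by norm_num))
      (hζ.ne_zero (NeZero.ne n)) (hmul ζ) (hrel ζ hζ)
    have hvn : (ζ ^ (2 * h - 1)) ^ (2 * k) = 1 := by
      rw [← pow_mul, mul_comm, pow_mul, ← hn, hζ.pow_eq_one, one_pow]
    rw [pow_mul, hv2, hkodd.neg_one_pow] at hvn
    norm_num at hvn
  · have h5 := pow_five_eq_neg_one_of_pow_five_eq_one hu.pow_eq_one (hu.ne_one (by norm_num))
      (hmul ζ) (hrel ζ hζ)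
    have h10 : n ∣ 10 := hζ.dvd_of_pow_eq_one 10 (by linear_combination (ζ ^ 5 - 1) * h5)
    obtain rfl : n = 10 := by
      have := Nat.le_of_dvd (by norm_num) h10; have := NeZero.ne n; omega
    have := mod_five_eq_of_isPrimitiveRoot_ten hζ (hmul ζ) (hrel ζ hζ)
    omega

theorem stmt_6 (h : ℕ) (hh : 1 ≤ h) (k : ℕ) (hk : 1 ≤ k) (hkodd : Odd k)
    (n : ℕ) (hn : n = 2 * k)
    (hdvd : cyclotomic n ℤ ∣
      (X : ℤ[X]) ^ (4 * h) - X ^ (4 * h - 1) + X ^ (2 * h) - X + 1) :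
    n ∣ 2 * h - 2 ∨ n ∣ 6 * h - 2 :=
  stmt_6_general h hh k hkodd n hn hdvd
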